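/- Let 1 ≤ j ≤ n, let I = (i_1 < ⋯ < i_j) ∈ I_s^j, and let S ⊆ {x_1,…,x_{n−j}} and d ≥ 1 satisfy d > |S| − p^{n−j}_{|S|}(λ^{(I)}). Set a := p^n_{|S|+j}(λ) − p^{n−j}_{|S|}(λ^{(I)}) (one checks 0 ≤ a ≤ j). Then e_d(S ∪ {x_{n−j+1},…,x_{n−j+a}}) · x_{n−j+1}^{i_1} x_{n−j+2}^{i_2} ⋯ x_n^{i_j} ∈ I_{n,λ,s}. -/

import Mathlib

/-!
Since `x_z e_D(U) = e_{D+1}(U ∪ {z}) - e_{D+1}(U)` for `z ∉ U`, a monomial `∏_{z ∈ F} x_z^{c_z}`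
multiplying `e_D(U)` can be absorbed variable by variable; at every leaf of this recursion a
set `Γ ⊆ F` has been absorbed into `U` and every other `z ∈ F` has raised the degree by `c_z`, so
the product lies in `I_{n,λ,s}` once `|U| + |Γ| - p^n_{|U|+|Γ|}(λ) < D + |Γ| + ∑_{F \ Γ} c` for
all `Γ`. For `U = S ∪ {z_1,…,z_a}` and `F = {z_{a+1},…,z_j}` this follows from comparing the
conjugates of `λ` and `λ^{(I)}`: lowering row `i` of a partition lowers exactly the column
`c = λ_i`, and telescoping gives
`p^{n-j}_{|S|}(λ^{(I)}) + #{i ∈ I : i < λ'_{n-j-|S|+1}} ≤ p^n_{|S|+j}(λ)`.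
Hence at most `a` entries of `I` are below `λ'_{n-j-|S|+1}`, which bounds every exponent
`i_h` with `h > a` from below, and the monotonicity of `λ'` finishes the estimate.
-/

open MvPolynomial

/-- `j`-th entry (1-indexed) of the conjugate partition of the partition `L`. -/
def conjList (L : List ℕ) (j : ℕ) : ℕ := (L.filter fun x => j ≤ x).length

/-- `p^N_m(λ) = λ'_N + λ'_{N-1} + ⋯ + λ'_{N-m+1}`, the conjugate being padded by zeros. -/
def pcal (L : List ℕ) (N m : ℕ) : ℕ := ∑ i ∈ Finset.Icc (N - m + 1) N, conjList L i

/-- Elementary symmetric polynomial `e_d(S)` in the set of variables `S`. -/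
noncomputable def esymF {n : ℕ} (S : Finset (Fin n)) (d : ℕ) : MvPolynomial (Fin n) ℚ :=
  ∑ T ∈ S.powersetCard d, ∏ i ∈ T, X i

/-- The ideal `I_{n,λ,s}`, generated by the `x_i^s` and the partial elementary symmetric
polynomials `e_d(S)` for `d > |S| - p^n_{|S|}(λ)`. -/
noncomputable def IdealI (n s : ℕ) (L : List ℕ) : Ideal (MvPolynomial (Fin n) ℚ) :=
  Ideal.span ((Set.range fun i : Fin n => (X i : MvPolynomial (Fin n) ℚ) ^ s) ∪
    {p | ∃ (S : Finset (Fin n)) (d : ℕ), S.card - pcal L n S.card < d ∧ p = esymF S d})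

/-- `L` is a partition of `k` with at most `s` parts. -/
def IsPartitionOf (k s : ℕ) (L : List ℕ) : Prop :=
  L.Pairwise (· ≥ ·) ∧ (∀ x ∈ L, 0 < x) ∧ L.sum = k ∧ L.length ≤ s

/-- The monomial `x^α`. -/
noncomputable def monoOf {n : ℕ} (al : Fin n → ℕ) : MvPolynomial (Fin n) ℚ :=
  monomial (Finsupp.equivFunOnFinite.symm al) 1

/-- `λ^{(i)}`: subtract one from the `(i+1)`-st part (`i` 0-indexed), re-sort into
weakly decreasing order, and drop any zero part. -/
def reduce (L : List ℕ) (i : ℕ) : List ℕ :=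
  (List.insertionSort (· ≥ ·) (L.set i (L.getD i 0 - 1))).filter fun x => 0 < x

def reduceStep (L : List ℕ) (i : ℕ) : List ℕ := if i < L.length then reduce L i else L

def reduceSeq : List ℕ → List ℕ → List ℕ
  | L, [] => L
  | L, i :: rest => reduceSeq (reduceStep L i) rest

/-- `λ^{(I)}` where `I = (i_1 < ⋯ < i_j)` enumerates the finite set `T`
(the recursion processes `i_j` first, i.e. the entries in decreasing order). -/
def lamI (L : List ℕ) (T : Finset ℕ) : List ℕ := reduceSeq L ((T.sort (· ≤ ·)).reverse)

/-- The idempotent `ε_j = (1/j!) Σ sgn(π) π`, summed over the permutations fixing the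
letters `0,…,n-j-1`, acting linearly on polynomials by permuting the variables. -/
noncomputable def epsPoly (n j : ℕ) :
    MvPolynomial (Fin n) ℚ →ₗ[ℚ] MvPolynomial (Fin n) ℚ :=
  (j.factorial : ℚ)⁻¹ •
    ∑ π ∈ Finset.univ.filter
        (fun π : Equiv.Perm (Fin n) => ∀ i : Fin n, (i : ℕ) < n - j → π i = i),
      ((Equiv.Perm.sign π : ℤ) : ℚ) • (rename (⇑π) (R := ℚ)).toLinearMap

/-- The subspace `ε_j R_{n,λ,s}` of the quotient ring `R_{n,λ,s}`. -/
noncomputable def epsSubmodule (n s j : ℕ) (L : List ℕ) :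
    Submodule ℚ (MvPolynomial (Fin n) ℚ ⧸ IdealI n s L) :=
  Submodule.map ((Ideal.Quotient.mkₐ ℚ (IdealI n s L)).toLinearMap ∘ₗ epsPoly n j) ⊤

/-- The variable `z_{h+1} = x_{n-j+h}` (0-indexed `h`). -/
def zvar (n j : ℕ) (hjn : j ≤ n) (h : Fin j) : Fin n :=
  ⟨n - j + (h : ℕ), by have := h.isLt; omega⟩

/-- The monomial `z_1^{i_1} ⋯ z_j^{i_j}` where `(i_1 < ⋯ < i_j)` enumerates `T`. -/
noncomputable def zMono (n j : ℕ) (hjn : j ≤ n) (T : Finset ℕ) : MvPolynomial (Fin n) ℚ :=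
  ∏ h : Fin j, X (zvar n j hjn h) ^ ((T.sort (· ≤ ·)).getD (h : ℕ) 0)

lemma conjList_cons (x : ℕ) (L : List ℕ) (c : ℕ) :
    conjList (x :: L) c = conjList L c + if c ≤ x then 1 else 0 := by
  by_cases h : c ≤ x <;> simp [conjList, h]

lemma conjList_eq_countP (L : List ℕ) (c : ℕ) : conjList L c = L.countP (c ≤ ·) :=
  (List.countP_eq_length_filter ..).symm

lemma conjList_antitone (L : List ℕ) : Antitone (conjList L) := fun _ _ h =>
  List.Sublist.length_le (List.monotone_filter_right L fun x hx => by
    simp only [decide_eq_true_eq] at hx ⊢; omega)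

lemma lt_conjList_iff {L : List ℕ} (hL : L.Pairwise (· ≥ ·)) {i : ℕ} (hi : i < L.length)
    (c : ℕ) : i < conjList L c ↔ c ≤ L[i] := by
  induction L generalizing i with
  | nil => simp at hi
  | cons x L ih =>
    have hx : ∀ y ∈ L, y ≤ x := fun y hy => List.rel_of_pairwise_cons hL hy
    have hzero : ¬ c ≤ x → conjList L c = 0 := fun hcx => by
      rw [conjList_eq_countP, List.countP_eq_zero]
      intro y hy; have := hx y hy; simp only [decide_eq_true_eq]; omega
    rw [conjList_cons]
    cases i with
    | zero => by_cases hcx : c ≤ x <;> simp [hcx, hzero]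
    | succ i =>
      have hi' : i < L.length := by simpa using hi
      have := hx _ (List.getElem_mem hi')
      by_cases hcx : c ≤ x
      · simp [hcx, ih hL.of_cons hi']
      · simp only [hcx, hzero hcx, List.getElem_cons_succ, if_false]; omega

lemma conjList_set {L : List ℕ} {i : ℕ} (hi : i < L.length) (v c : ℕ) :
    conjList (L.set i v) c + (if c ≤ L[i] then 1 else 0)
      = conjList L c + if c ≤ v then 1 else 0 := by
  induction L generalizing i with
  | nil => simp at hi
  | cons x L ih =>
    cases i with
    | zero => simp only [List.set_cons_zero, conjList_cons, List.getElem_cons_zero]; omega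
    | succ i =>
      have := ih (i := i) (by simpa using hi)
      simp only [List.set_cons_succ, conjList_cons, List.getElem_cons_succ]; omega

lemma conjList_reduce (L : List ℕ) (i : ℕ) {c : ℕ} (hc : 1 ≤ c) :
    conjList (reduce L i) c = conjList (L.set i (L.getD i 0 - 1)) c := by
  rw [conjList_eq_countP, conjList_eq_countP, reduce, List.countP_filter,
    (List.perm_insertionSort _ _).countP_eq]
  exact List.countP_congr fun y _ => by simp only [decide_eq_true_eq, Bool.and_eq_true]; omega

lemma conjList_le_length (L : List ℕ) (c : ℕ) : conjList L c ≤ L.length :=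
  List.length_filter_le _ _

/-- Lowering row `i` changes `λ'_c` only for `c = λ_i`, i.e. when `λ'_{c+1} ≤ i < λ'_c`. -/
lemma conjList_reduceStep {L : List ℕ} (hL : L.Pairwise (· ≥ ·)) (i : ℕ) {c : ℕ} (hc : 1 ≤ c) :
    conjList (reduceStep L i) c + (if i < conjList L c then 1 else 0)
      = conjList L c + if i < conjList L (c + 1) then 1 else 0 := by
  by_cases hi : i < L.length
  · have hset := conjList_set hi (L[i] - 1) c
    rw [reduceStep, if_pos hi, conjList_reduce L i hc, List.getD_eq_getElem _ _ hi]
    simp only [lt_conjList_iff hL hi]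
    split_ifs at hset ⊢ <;> omega
  · have := conjList_le_length L c
    have := conjList_le_length L (c + 1)
    rw [reduceStep, if_neg hi]
    split_ifs <;> omega

lemma pairwise_reduceStep {L : List ℕ} (hL : L.Pairwise (· ≥ ·)) (i : ℕ) :
    (reduceStep L i).Pairwise (· ≥ ·) := by
  unfold reduceStep reduce
  split_ifs
  · exact (List.pairwise_insertionSort _ _).filter _
  · exact hL

lemma lt_conjList_reduceStep_iff {L : List ℕ} (hL : L.Pairwise (· ≥ ·)) {i i₀ : ℕ} (hi : i < i₀)
    {c : ℕ} (hc : 1 ≤ c) : i < conjList (reduceStep L i₀) c ↔ i < conjList L c := by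
  have hstep := conjList_reduceStep hL i₀ hc
  have := conjList_antitone L (Nat.le_add_right c 1)
  split_ifs at hstep <;> omega

lemma conjList_reduceSeq_add_countP {D : List ℕ} (hD : D.Pairwise (· > ·)) {L : List ℕ}
    (hL : L.Pairwise (· ≥ ·)) {c : ℕ} (hc : 1 ≤ c) :
    conjList (reduceSeq L D) c + D.countP (· < conjList L c)
      = conjList L c + D.countP (· < conjList L (c + 1)) := by
  induction D generalizing L with
  | nil => simp [reduceSeq]
  | cons i₀ D ih =>
    have hlt : ∀ i ∈ D, i < i₀ := fun i hi => List.rel_of_pairwise_cons hD hi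
    have hcount : ∀ c, 1 ≤ c →
        D.countP (· < conjList (reduceStep L i₀) c) = D.countP (· < conjList L c) :=
      fun c hc => List.countP_congr fun i hi => by
        simpa using lt_conjList_reduceStep_iff hL (hlt i hi) hc
    have := ih hD.of_cons (pairwise_reduceStep hL i₀)
    rw [hcount c hc, hcount (c + 1) (by omega)] at this
    have := conjList_reduceStep hL i₀ hc
    simp only [reduceSeq, List.countP_cons, decide_eq_true_eq]
    omega

lemma sum_conjList_reduceSeq_add_countP {D : List ℕ} (hD : D.Pairwise (· > ·)) {L : List ℕ}
    (hL : L.Pairwise (· ≥ ·)) {x y : ℕ} (hxy : x ≤ y) :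
    ∑ c ∈ Finset.Ioc x y, conjList (reduceSeq L D) c + D.countP (· < conjList L (x + 1))
      = ∑ c ∈ Finset.Ioc x y, conjList L c + D.countP (· < conjList L (y + 1)) := by
  induction y, hxy using Nat.le_induction with
  | base => simp
  | succ y hxy ih =>
    have := conjList_reduceSeq_add_countP hD hL (c := y + 1) (by omega)
    rw [Finset.sum_Ioc_succ_top hxy, Finset.sum_Ioc_succ_top hxy]
    omega

lemma pcal_eq_sum_Ioc (L : List ℕ) (N m : ℕ) :
    pcal L N m = ∑ c ∈ Finset.Ioc (N - m) N, conjList L c := by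
  rw [pcal, Finset.Icc_add_one_left_eq_Ioc]

lemma countP_sort_lt_le (T : Finset ℕ) (K : ℕ) : (T.sort (· ≤ ·)).countP (· < K) ≤ K := by
  rw [← Multiset.coe_countP, Finset.sort_eq, Multiset.countP_eq_card_filter]
  exact (Finset.card_le_card (s := T.filter (· < K)) fun i hi => by simp_all).trans
    (Finset.card_range K).le

lemma pcal_lamI_add_countP_le {L : List ℕ} (hL : L.Pairwise (· ≥ ·)) (T : Finset ℕ)
    {n m j : ℕ} (hj : 1 ≤ j) (hmj : m + j ≤ n) :
    pcal (lamI L T) (n - j) m + (T.sort (· ≤ ·)).countP (· < conjList L (n - j - m + 1))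
      ≤ pcal L n (m + j) := by
  have hD : (T.sort (· ≤ ·)).reverse.Pairwise (· > ·) :=
    List.pairwise_reverse.mpr (Finset.sortedLT_sort T).pairwise
  have htel := sum_conjList_reduceSeq_add_countP hD hL (Nat.sub_le (n - j) m)
  rw [List.countP_reverse, List.countP_reverse] at htel
  have htop : conjList L (n - j + 1) ≤ ∑ c ∈ Finset.Ioc (n - j) n, conjList L c :=
    Finset.single_le_sum (fun _ _ => Nat.zero_le _) (Finset.mem_Ioc.mpr ⟨by omega, by omega⟩)
  have := countP_sort_lt_le T (conjList L (n - j + 1))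
  rw [lamI, pcal_eq_sum_Ioc, pcal_eq_sum_Ioc, show n - (m + j) = n - j - m by omega,
    ← Finset.sum_Ioc_consecutive _ (Nat.sub_le (n - j) m) (Nat.sub_le n j)]
  omega

lemma pcal_le_mul_add_pcal (L : List ℕ) {n M M' : ℕ} (hM : M ≤ M') (hM' : M' ≤ n) :
    pcal L n M' ≤ (M' - M) * conjList L (n - M' + 1) + pcal L n M := by
  rw [pcal_eq_sum_Ioc, pcal_eq_sum_Ioc,
    ← Finset.sum_Ioc_consecutive _ (by omega : n - M' ≤ n - M) (Nat.sub_le n M)]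
  gcongr
  calc ∑ c ∈ Finset.Ioc (n - M') (n - M), conjList L c
      ≤ (Finset.Ioc (n - M') (n - M)).card • conjList L (n - M' + 1) :=
        Finset.sum_le_card_nsmul _ _ _ fun c hc =>
          conjList_antitone L (by simp only [Finset.mem_Ioc] at hc; omega)
    _ = (M' - M) * conjList L (n - M' + 1) := by rw [Nat.card_Ioc, smul_eq_mul]; congr 1; omega

lemma esymF_insert {n : ℕ} {z : Fin n} {U : Finset (Fin n)} (hz : z ∉ U) (D : ℕ) :
    esymF (insert z U) (D + 1) = esymF U (D + 1) + X z * esymF U D := by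
  rw [esymF, esymF, esymF, Finset.powersetCard_succ_insert hz, Finset.sum_union, Finset.sum_image,
    Finset.mul_sum]
  · congr 1
    refine Finset.sum_congr rfl fun t ht => ?_
    rw [Finset.prod_insert fun hzt => hz ((Finset.mem_powersetCard.mp ht).1 hzt)]
  · intro t ht t' ht' h
    rw [Finset.mem_coe, Finset.mem_powersetCard] at ht ht'
    rw [← Finset.erase_insert fun hzt => hz (ht.1 hzt),
      ← Finset.erase_insert fun hzt => hz (ht'.1 hzt), h]
  · refine Finset.disjoint_left.mpr fun t ht ht' => ?_
    obtain ⟨t', -, rfl⟩ := Finset.mem_image.mp ht'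
    exact hz ((Finset.mem_powersetCard.mp ht).1 (Finset.mem_insert_self z t'))

lemma esymF_mem_IdealI {n s : ℕ} {L : List ℕ} {U : Finset (Fin n)} {D : ℕ}
    (h : U.card - pcal L n U.card < D) : esymF U D ∈ IdealI n s L :=
  Ideal.subset_span (Set.mem_union_right _ ⟨U, D, h, rfl⟩)

lemma esymF_mul_prod_mem_IdealI {n : ℕ} (s : ℕ) (L : List ℕ) (c : Fin n → ℕ)
    (F : Finset (Fin n)) (U : Finset (Fin n)) (D : ℕ) (hUF : Disjoint U F)
    (h : ∀ Γ ⊆ F, U.card + Γ.card - pcal L n (U.card + Γ.card) < D + Γ.card + ∑ z ∈ F \ Γ, c z) :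
    esymF U D * ∏ z ∈ F, X z ^ c z ∈ IdealI n s L := by
  induction F using Finset.induction_on generalizing U D with
  | empty => simpa using esymF_mem_IdealI (by simpa using h ∅ le_rfl)
  | insert z F hz ih =>
    rw [Finset.disjoint_insert_right] at hUF
    obtain ⟨hzU, hUF⟩ := hUF
    have h₀ : ∀ Γ ⊆ F, U.card + Γ.card - pcal L n (U.card + Γ.card)
        < D + Γ.card + c z + ∑ z ∈ F \ Γ, c z := fun Γ hΓ => by
      have := h Γ (hΓ.trans (Finset.subset_insert z F))
      rwa [Finset.insert_sdiff_of_notMem _ fun hzΓ => hz (hΓ hzΓ),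
        Finset.sum_insert fun hzΓ => hz (Finset.sdiff_subset hzΓ), ← add_assoc] at this
    have h₁ : ∀ Γ ⊆ F, U.card + Γ.card + 1 - pcal L n (U.card + Γ.card + 1)
        < D + Γ.card + 1 + ∑ z ∈ F \ Γ, c z := fun Γ hΓ => by
      have := h (insert z Γ) (Finset.insert_subset_insert z hΓ)
      rwa [Finset.card_insert_of_notMem fun hzΓ => hz (hΓ hzΓ), Finset.insert_sdiff_insert,
        Finset.sdiff_insert_of_notMem hz, ← add_assoc, ← add_assoc] at this
    clear h
    rw [Finset.prod_insert hz]
    generalize c z = e at h₀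
    induction e generalizing D with
    | zero => simpa using ih U D hUF h₀
    | succ e ihe =>
      have hsplit : esymF U D * (X z ^ (e + 1) * ∏ w ∈ F, X w ^ c w)
          = esymF (insert z U) (D + 1) * (∏ w ∈ F, X w ^ c w) * X z ^ e
            - esymF U (D + 1) * (X z ^ e * ∏ w ∈ F, X w ^ c w) := by
        rw [esymF_insert hzU]; ring
      rw [hsplit]
      refine Ideal.sub_mem _ (Ideal.mul_mem_right _ _ (ih _ _ ?_ fun Γ hΓ => ?_))
        (ihe (D + 1) (fun Γ hΓ => by have := h₁ Γ hΓ; omega) fun Γ hΓ => by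
          have := h₀ Γ hΓ; omega)
      · exact Finset.disjoint_insert_left.mpr ⟨hz, hUF⟩
      · rw [Finset.card_insert_of_notMem hzU, add_right_comm U.card]
        have := h₁ Γ hΓ
        omega

lemma esymF_mul_prod_mem_IdealI_of_le {n : ℕ} (s : ℕ) (L : List ℕ) (c : Fin n → ℕ)
    (F U : Finset (Fin n)) (D C : ℕ) (hUF : Disjoint U F) (hC : ∀ z ∈ F, C ≤ c z)
    (h : ∀ g ≤ F.card, U.card + g - pcal L n (U.card + g) < D + g + (F.card - g) * C) :
    esymF U D * ∏ z ∈ F, X z ^ c z ∈ IdealI n s L := by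
  refine esymF_mul_prod_mem_IdealI s L c F U D hUF fun Γ hΓ =>
    (h _ (Finset.card_le_card hΓ)).trans_le (Nat.add_le_add_left ?_ _)
  calc (F.card - Γ.card) * C = (F \ Γ).card • C := by
        rw [Finset.card_sdiff_of_subset hΓ, smul_eq_mul]
    _ ≤ ∑ z ∈ F \ Γ, c z := Finset.card_nsmul_le_sum _ _ _ fun z hz => hC z (Finset.sdiff_subset hz)

lemma le_getElem_of_countP_lt_le {l : List ℕ} (hl : l.SortedLE) {h : ℕ} (hh : h < l.length)
    {C : ℕ} (hcount : l.countP (· < C) ≤ h) : C ≤ l[h] := by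
  by_contra! hlt
  have htake : (l.take (h + 1)).countP (· < C) = h + 1 := by
    rw [List.countP_eq_length.mpr, List.length_take_of_le hh]
    intro y hy
    obtain ⟨i, hi, rfl⟩ := List.mem_take_iff_getElem.mp hy
    simpa using (hl.getElem_le_getElem_of_le (by omega : i ≤ h)).trans_lt hlt
  have := (List.take_sublist (h + 1) l).countP_le (p := (· < C))
  omega

lemma sub_pcal_lt (L : List ℕ) {n m j a p d g : ℕ} (hmj : m + j ≤ n) (hd : m - p < d)
    (hpa : p + a ≤ pcal L n (m + j)) (hg : a + g ≤ j) :
    m + a + g - pcal L n (m + a + g) < d + g + (j - a - g) * conjList L (n - j - m + 1) := by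
  have := pcal_le_mul_add_pcal L (M := m + a + g) (by omega) hmj
  rw [show m + j - (m + a + g) = j - a - g by omega,
    show n - (m + j) + 1 = n - j - m + 1 by omega] at this
  omega

section zvar

variable {n j : ℕ} (hjn : j ≤ n)

lemma zvar_injective : Function.Injective (zvar n j hjn) := fun h h' e => by
  simpa [zvar, Fin.ext_iff] using e

lemma card_image_zvar_filter_lt (a : ℕ) :
    ((Finset.univ.filter fun h : Fin j => (h : ℕ) < a).image (zvar n j hjn)).card = min a j := by
  rw [Finset.card_image_of_injective _ (zvar_injective hjn), Fin.card_filter_val_lt, min_comm]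

lemma card_image_zvar_filter_not_lt (a : ℕ) :
    ((Finset.univ.filter fun h : Fin j => ¬ (h : ℕ) < a).image (zvar n j hjn)).card
      = j - min a j := by
  have := Finset.card_filter_add_card_filter_not (s := Finset.univ) (fun h : Fin j => (h : ℕ) < a)
  rw [Fin.card_filter_val_lt, Finset.card_univ, Fintype.card_fin] at this
  rw [Finset.card_image_of_injective _ (zvar_injective hjn)]
  omega

lemma disjoint_image_zvar {S : Finset (Fin n)} (hS : ∀ x ∈ S, (x : ℕ) < n - j)
    (P : Finset (Fin j)) : Disjoint S (P.image (zvar n j hjn)) :=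
  Finset.disjoint_left.mpr fun x hx hx' => by
    obtain ⟨h, -, rfl⟩ := Finset.mem_image.mp hx'
    simpa [zvar] using hS _ hx

/-- The exponent of `x_z` in `zMono n j hjn T`, for `n - j ≤ z`. -/
def zExp (n j : ℕ) (T : Finset ℕ) (z : Fin n) : ℕ := (T.sort (· ≤ ·)).getD (z - (n - j)) 0

lemma zExp_zvar (T : Finset ℕ) (h : Fin j) :
    zExp n j T (zvar n j hjn h) = (T.sort (· ≤ ·)).getD h 0 := by
  simp [zExp, zvar]

lemma zMono_eq_mul_prod (T : Finset ℕ) (a : ℕ) :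
    zMono n j hjn T = (∏ h ∈ Finset.univ.filter (fun h : Fin j => (h : ℕ) < a),
        X (zvar n j hjn h) ^ (T.sort (· ≤ ·)).getD h 0) *
      ∏ z ∈ (Finset.univ.filter fun h : Fin j => ¬ (h : ℕ) < a).image (zvar n j hjn),
        X z ^ zExp n j T z := by
  rw [zMono, ← Finset.prod_filter_mul_prod_filter_not Finset.univ (fun h : Fin j => (h : ℕ) < a),
    Finset.prod_image fun _ _ _ _ e => zvar_injective hjn e]
  simp only [zExp_zvar]

end zvar

lemma card_le_of_forall_val_lt {n N : ℕ} {S : Finset (Fin n)} (hS : ∀ x ∈ S, (x : ℕ) < N) :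
    S.card ≤ N := by
  have := Finset.card_le_card (s := S) (t := Finset.univ.filter fun x : Fin n => (x : ℕ) < N)
    fun x hx => by simpa using hS x hx
  rw [Fin.card_filter_val_lt] at this
  omega

theorem stmt14_general (n k s : ℕ)
    (L : List ℕ) (hL : IsPartitionOf k s L)
    (j : ℕ) (hj : 1 ≤ j) (hjn : j ≤ n)
    (T : Finset ℕ) (hT : T ∈ (Finset.range s).powersetCard j)
    (S : Finset (Fin n)) (hS : ∀ x ∈ S, (x : ℕ) < n - j)
    (d : ℕ)
    (hd : S.card - pcal (lamI L T) (n - j) S.card < d) :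
    esymF
        (S ∪ (Finset.univ.filter fun h : Fin j =>
          (h : ℕ) < pcal L n (S.card + j) - pcal (lamI L T) (n - j) S.card).image
          (zvar n j hjn)) d *
      zMono n j hjn T ∈ IdealI n s L := by
  have hTcard : T.card = j := (Finset.mem_powersetCard.mp hT).2
  have hmj : S.card + j ≤ n := by have := card_le_of_forall_val_lt hS; omega
  set p := pcal (lamI L T) (n - j) S.card
  set a := pcal L n (S.card + j) - p
  have hpA := pcal_lamI_add_countP_le hL.1 T hj hmj
  rw [zMono_eq_mul_prod hjn T a, mul_left_comm]
  refine Ideal.mul_mem_left _ _ (esymF_mul_prod_mem_IdealI_of_le s L _ _ _ d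
    (conjList L (n - j - S.card + 1)) ?_ ?_ ?_)
  · exact Finset.disjoint_union_left.mpr ⟨disjoint_image_zvar hjn hS _,
      (Finset.disjoint_image (zvar_injective hjn)).mpr (Finset.disjoint_filter_filter_not _ _ _)⟩
  · intro z hz
    obtain ⟨h, hh, rfl⟩ := Finset.mem_image.mp hz
    have hlen : (h : ℕ) < (T.sort (· ≤ ·)).length := by simp [hTcard]
    rw [zExp_zvar, List.getD_eq_getElem _ _ hlen]
    exact le_getElem_of_countP_lt_le (Finset.sortedLT_sort T).sortedLE hlen
      (by simp only [Finset.mem_filter] at hh; omega)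
  · rw [Finset.card_union_of_disjoint (disjoint_image_zvar hjn hS _),
      card_image_zvar_filter_lt, card_image_zvar_filter_not_lt]
    intro g hg
    simpa only [add_assoc] using sub_pcal_lt L hmj hd (a := min a j) (by omega) (by omega)

/-- For `I ∈ 𝓘_s^j`, `S ⊆ {x_1,…,x_{n-j}}` and
`d > |S| - p^{n-j}_{|S|}(λ^{(I)})`, setting `a = p^n_{|S|+j}(λ) - p^{n-j}_{|S|}(λ^{(I)})`,
we have `e_d(S ∪ {z_1,…,z_a}) · z^I ∈ I_{n,λ,s}`. -/
theorem stmt14 (n k s : ℕ) (hk : 0 < k) (hs : 0 < s) (hkn : k ≤ n)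
    (L : List ℕ) (hL : IsPartitionOf k s L)
    (j : ℕ) (hj : 1 ≤ j) (hjn : j ≤ n)
    (T : Finset ℕ) (hT : T ∈ (Finset.range s).powersetCard j)
    (S : Finset (Fin n)) (hS : ∀ x ∈ S, (x : ℕ) < n - j)
    (d : ℕ) (hd1 : 1 ≤ d)
    (hd : S.card - pcal (lamI L T) (n - j) S.card < d) :
    esymF
        (S ∪ (Finset.univ.filter fun h : Fin j =>
          (h : ℕ) < pcal L n (S.card + j) - pcal (lamI L T) (n - j) S.card).image
          (zvar n j hjn)) d *
      zMono n j hjn T ∈ IdealI n s L :=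
  stmt14_general n k s L hL j hj hjn T hT S hS d hd
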